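/- Let α be the unique formal power series over ℚ with constant term 0 satisfying α·(1-α)·(1-2α) = X. Then in ℚ[[X]] one has (1 - 6α + 6α²)·Σ_{n≥0} f_5(n)·X^n = 1 - 2α. -/

import Mathlib

open PowerSeries Finset

/-- `f₅(n) = Σ_{i=n-1}^{2n-1} C(3n, n+i+1)·C(i, n-1)` for `n ≥ 1`, with `f₅(0) = 1`. -/
def f5 (n : ℕ) : ℕ :=
  if n = 0 then 1
  else ∑ i ∈ Finset.Icc (n - 1) (2 * n - 1), (3 * n).choose (n + i + 1) * i.choose (n - 1)

/-!
Both sides are determined by the same two-step recurrence. Writing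
`f₅(n) = [Xⁿ] (1 + X)^(3n) (1 - X)^(-n)`, creative telescoping gives
`(n + 1)(n + 2) f₅(n + 2) = 12 (3n + 1)(3n + 5) f₅(n)`. On the other side, differentiating the
cubic gives `(1 - 6α + 6α²) α' = 1`, so the claim says that `K = (1 - 2α) α'` is the generating
function of `f₅`. A short computation with `α' = 1 / (1 - 6α + 6α²)` shows
`(1 - 108 X²) K'' = 324 X K' + 60 K`, whose coefficients satisfy the same recurrence, and the
initial values `1, 4` agree.
-/

namespace Derivation

variable {R A : Type*} [CommRing R] [CommRing A] [Algebra R A] (d : Derivation R A A)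

@[simp]
theorem map_ofNat (k : ℕ) [k.AtLeastTwo] : d (ofNat(k) : A) = 0 :=
  d.map_natCast k

theorem mul_apply_eq_one_of_cubic {x a : A} (hx : d x = 1)
    (ha : a * (1 - a) * (1 - 2 * a) = x) : (1 - 6 * a + 6 * a ^ 2) * d a = 1 := by
  have h := congrArg d ha
  simp only [leibniz, map_sub, smul_eq_mul, hx, map_one_eq_zero, map_ofNat] at h
  linear_combination h

theorem apply_apply_of_mul_apply_eq_one {a : A} (h : (1 - 6 * a + 6 * a ^ 2) * d a = 1) :
    d (d a) = 6 * (1 - 2 * a) * d a ^ 3 := by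
  have h' := congrArg d h
  simp only [leibniz, leibniz_pow, map_add, map_sub, smul_eq_mul, nsmul_eq_mul, map_one_eq_zero,
    map_ofNat] at h'
  linear_combination d a * h' - d (d a) * h

theorem apply_one_sub_two_mul_mul_apply {a : A} (h : (1 - 6 * a + 6 * a ^ 2) * d a = 1) :
    d ((1 - 2 * a) * d a) = 2 * d a ^ 2 * (1 + d a) := by
  simp only [leibniz, map_sub, smul_eq_mul, map_one_eq_zero, map_ofNat,
    apply_apply_of_mul_apply_eq_one d h]
  linear_combination 4 * d a ^ 2 * h

theorem apply_apply_one_sub_two_mul_mul_apply {a : A}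
    (h : (1 - 6 * a + 6 * a ^ 2) * d a = 1) :
    d (d ((1 - 2 * a) * d a)) = 12 * (1 - 2 * a) * d a ^ 4 * (2 + 3 * d a) := by
  simp only [apply_one_sub_two_mul_mul_apply d h, leibniz, leibniz_pow, map_add, smul_eq_mul,
    nsmul_eq_mul, map_one_eq_zero, map_ofNat, apply_apply_of_mul_apply_eq_one d h]
  ring

theorem ode_of_cubic {x a : A} (hx : d x = 1) (ha : a * (1 - a) * (1 - 2 * a) = x) :
    (1 - 108 * x ^ 2) * d (d ((1 - 2 * a) * d a))
      = 324 * x * d ((1 - 2 * a) * d a) + 60 * ((1 - 2 * a) * d a) := by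
  have h := mul_apply_eq_one_of_cubic d hx ha
  rw [apply_apply_one_sub_two_mul_mul_apply d h, apply_one_sub_two_mul_mul_apply d h]
  set D := 1 - 6 * a + 6 * a ^ 2
  set b := d a
  have hx₂ : 1 - 108 * x ^ 2 = D ^ 2 * (3 - 2 * D) := by subst ha; ring
  have hx₁ : 324 * x = 54 * (1 - 2 * a) * (1 - D) := by subst ha; ring
  have h₂ : (D * b) ^ 2 = 1 := by rw [h, one_pow]
  have h₃ : (D * b) ^ 3 = 1 := by rw [h, one_pow]
  rw [hx₂, hx₁]
  -- every monomial `D ^ k * b ^ (k + m)` collapses to `b ^ m`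
  linear_combination (1 - 2 * a) * (72 * b ^ 2 * h₂ + 108 * b ^ 3 * h₂ - 48 * b * h₃
    - 72 * b ^ 2 * h₃ + 108 * b * h + 108 * b ^ 2 * h)

end Derivation

namespace PowerSeries

variable {R : Type*} [CommRing R]

theorem coeff_one_add_X_pow (k j : ℕ) : coeff j ((1 + X : R⟦X⟧) ^ k) = k.choose j := by
  have h : (1 + X : R⟦X⟧) ^ k = ((1 + Polynomial.X) ^ k : Polynomial R) := by simp
  rw [h, Polynomial.coeff_coe, Polynomial.coeff_one_add_X_pow]

theorem one_add_X_mul_derivative_one_add_X_pow (k : ℕ) :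
    (1 + X) * d⁄dX R ((1 + X) ^ k) = (k : R⟦X⟧) * (1 + X) ^ k := by
  rcases k with _ | k
  · simp
  · simp only [derivative_pow, map_add, derivative_X, derivative_one, Nat.add_sub_cancel]
    push_cast
    ring

theorem one_sub_X_mul_derivative_invOneSubPow (k : ℕ) :
    (1 - X) * d⁄dX R (invOneSubPow R k).val = (k : R⟦X⟧) * (invOneSubPow R k).val := by
  have h₁ : (1 - X) * (invOneSubPow R 1).val = 1 := by
    simpa using one_sub_pow_add_mul_invOneSubPow_val_eq_one_sub_pow R 0 1
  have h₁' : (1 - X) * d⁄dX R (invOneSubPow R 1).val = (invOneSubPow R 1).val := by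
    have h := congrArg (d⁄dX R) h₁
    simp only [Derivation.leibniz, map_sub, derivative_X, Derivation.map_one_eq_zero,
      smul_eq_mul] at h
    linear_combination h
  induction k with
  | zero => simp [invOneSubPow_zero]
  | succ k ih =>
    rw [invOneSubPow_add, Units.val_mul, Derivation.leibniz, smul_eq_mul, smul_eq_mul]
    push_cast
    linear_combination (invOneSubPow R 1).val * ih + (invOneSubPow R k).val * h₁'

theorem one_sub_X_sq_mul_derivative_one_add_X_pow_mul_invOneSubPow (j k : ℕ) :
    (1 - X ^ 2) * d⁄dX R ((1 + X) ^ j * (invOneSubPow R k).val)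
      = ((j : R⟦X⟧) * (1 - X) + (k : R⟦X⟧) * (1 + X))
        * ((1 + X) ^ j * (invOneSubPow R k).val) := by
  rw [Derivation.leibniz, smul_eq_mul, smul_eq_mul]
  linear_combination
    (1 - X) * (invOneSubPow R k).val * one_add_X_mul_derivative_one_add_X_pow (R := R) j
      + (1 + X) * (1 + X) ^ j * one_sub_X_mul_derivative_invOneSubPow (R := R) k

theorem coeff_X_mul_derivative (f : R⟦X⟧) (n : ℕ) :
    coeff n (X * d⁄dX R f) = n * coeff n f := by
  rcases n with _ | n
  · simp
  · rw [coeff_succ_X_mul, coeff_derivative, mul_comm]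
    push_cast
    rfl

theorem coeff_X_sq_mul_derivative_derivative (f : R⟦X⟧) (n : ℕ) :
    coeff n (X ^ 2 * d⁄dX R (d⁄dX R f)) = n * (n - 1) * coeff n f := by
  rcases n with _ | _ | n
  · simp [coeff_X_pow_mul']
  · simp [coeff_X_pow_mul']
  · rw [coeff_X_pow_mul _ 2 n, coeff_derivative, coeff_derivative]
    push_cast
    ring

theorem coeff_add_two_of_ode {K : R⟦X⟧} {a b c : R}
    (h : (1 - C a * X ^ 2) * d⁄dX R (d⁄dX R K) = C b * X * d⁄dX R K + C c * K) (n : ℕ) :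
    (n + 1) * (n + 2) * coeff (n + 2) K = (a * n * (n - 1) + b * n + c) * coeff n K := by
  have hn := congrArg (coeff n) h
  rw [sub_mul, one_mul, mul_assoc, mul_assoc, map_sub, map_add, coeff_C_mul, coeff_C_mul,
    coeff_C_mul, coeff_X_sq_mul_derivative_derivative, coeff_X_mul_derivative, coeff_derivative,
    coeff_derivative] at hn
  push_cast at hn
  linear_combination hn

end PowerSeries

theorem eq_of_two_step_recurrence {K : Type*} [CommRing K] [IsDomain K] [CharZero K]
    {u v : ℕ → K} (p : ℕ → K) (hu : ∀ n, (n + 1) * (n + 2) * u (n + 2) = p n * u n)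
    (hv : ∀ n, (n + 1) * (n + 2) * v (n + 2) = p n * v n) (h₀ : u 0 = v 0) (h₁ : u 1 = v 1) :
    u = v := by
  funext n
  induction n using Nat.twoStepInduction with
  | zero => exact h₀
  | one => exact h₁
  | more n ih _ =>
    have hne : ((n : K) + 1) * (n + 2) ≠ 0 :=
      mul_ne_zero n.cast_add_one_ne_zero (by exact_mod_cast (n + 1).succ_ne_zero)
    exact mul_left_cancel₀ hne (by rw [hu, hv, ih])

theorem f5_eq_coeff {R : Type*} [CommRing R] (n : ℕ) :
    (f5 n : R) = coeff n ((1 + X) ^ (3 * n) * (invOneSubPow R n).val) := by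
  rcases n with _ | m
  · simp [f5, invOneSubPow_zero]
  rw [invOneSubPow_val_succ_eq_mk_add_choose, coeff_mul,
    Finset.Nat.sum_antidiagonal_eq_sum_range_succ
      (fun i j => coeff i ((1 + X : R⟦X⟧) ^ (3 * (m + 1))) * coeff j (mk _)),
    ← Finset.sum_range_reflect, f5, if_neg m.succ_ne_zero, ← Finset.Ico_add_one_right_eq_Icc,
    Finset.sum_Ico_eq_sum_range]
  push_cast
  refine Finset.sum_congr (by congr 1; omega) fun j hj => ?_
  rw [Finset.mem_range] at hj
  simp only [coeff_one_add_X_pow, coeff_mk]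
  rw [Nat.choose_symm_of_eq_add (by omega : 3 * (m + 1) = m + 1 + (m + j) + 1 + (m + 1 - j)),
    show m + 1 - (m + 1 - j) = j by omega]

section Telescoping

variable {R : Type*} [CommRing R] [IsDomain R]

/-- Zeilberger's algorithm applied to the summand of `f5` produces this certificate. -/
noncomputable def f5Certificate (n : ℕ) : R⟦X⟧ :=
  (X ^ 6 - 1) * (n + 1 : R⟦X⟧) + (X ^ 5 - X) * (10 * n + 14 : R⟦X⟧)
    + (X ^ 2 - X ^ 4) * (55 * n + 95 : R⟦X⟧)

theorem f5_telescoping {n : ℕ} {T : R⟦X⟧}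
    (hT : (1 - X ^ 2) * d⁄dX R T = (4 * (n : R⟦X⟧) + 2 + (2 - 2 * (n : R⟦X⟧)) * X) * T) :
    C ((n + 1) * (n + 2) : R) * ((1 + X) ^ 6 * T)
      - C (12 * (3 * n + 1) * (3 * n + 5) : R) * (X ^ 2 * ((1 - X) ^ 2 * T))
      = X * d⁄dX R (f5Certificate n * T) - C (n + 2 : R) * (f5Certificate n * T) := by
  have hne : (1 - X ^ 2 : R⟦X⟧) ≠ 0 := fun h => by simpa using congrArg constantCoeff h
  apply mul_left_cancel₀ hne
  linear_combination (norm := skip) -X * f5Certificate n * hT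
  simp only [f5Certificate, Derivation.leibniz, Derivation.leibniz_pow, map_add, map_sub, map_mul,
    smul_eq_mul, nsmul_eq_mul, derivative_X, Derivation.map_natCast, Derivation.map_ofNat,
    Derivation.map_one_eq_zero, map_natCast, map_ofNat, map_one]
  ring

end Telescoping

theorem f5_recurrence (n : ℕ) :
    (n + 1) * (n + 2) * f5 (n + 2) = 12 * (3 * n + 1) * (3 * n + 5) * f5 n := by
  suffices h : ((n + 1) * (n + 2) * f5 (n + 2) : ℚ) = 12 * (3 * n + 1) * (3 * n + 5) * f5 n by
    exact_mod_cast h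
  set T : ℚ⟦X⟧ := (1 + X) ^ (3 * n) * (invOneSubPow ℚ (n + 2)).val with hT_def
  have hT : (1 - X ^ 2) * d⁄dX ℚ T
      = (4 * (n : ℚ⟦X⟧) + 2 + (2 - 2 * (n : ℚ⟦X⟧)) * X) * T := by
    have h := one_sub_X_sq_mul_derivative_one_add_X_pow_mul_invOneSubPow (R := ℚ) (3 * n)
      (n + 2)
    push_cast at h
    linear_combination h
  have hhigh : (f5 (n + 2) : ℚ) = coeff (n + 2) ((1 + X) ^ 6 * T) := by
    rw [f5_eq_coeff, hT_def]
    ring_nf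
  have hlow : (f5 n : ℚ) = coeff (n + 2) (X ^ 2 * ((1 - X) ^ 2 * T)) := by
    rw [coeff_X_pow_mul, hT_def, mul_left_comm,
      one_sub_pow_mul_invOneSubPow_val_add_eq_invOneSubPow_val, f5_eq_coeff]
  have h := congrArg (coeff (n + 2)) (f5_telescoping hT)
  rw [map_sub, map_sub, coeff_C_mul, coeff_C_mul, coeff_C_mul, coeff_X_mul_derivative, ← hhigh,
    ← hlow] at h
  push_cast at h
  linear_combination h

theorem f5_generating_function (α : PowerSeries ℚ)
    (h0 : PowerSeries.constantCoeff α = 0)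
    (hα : α * (1 - α) * (1 - 2 * α) = PowerSeries.X) :
    (1 - 6 * α + 6 * α ^ 2) * PowerSeries.mk (fun n => (f5 n : ℚ)) = 1 - 2 * α := by
  have hb := (d⁄dX ℚ).mul_apply_eq_one_of_cubic derivative_X hα
  have hb₀ : constantCoeff (d⁄dX ℚ α) = 1 := by simpa [h0] using congrArg constantCoeff hb
  set K := (1 - 2 * α) * d⁄dX ℚ α with hK
  have hK' : d⁄dX ℚ K = 2 * d⁄dX ℚ α ^ 2 * (1 + d⁄dX ℚ α) :=
    (d⁄dX ℚ).apply_one_sub_two_mul_mul_apply hb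
  have hode : (1 - C 108 * X ^ 2) * d⁄dX ℚ (d⁄dX ℚ K) = C 324 * X * d⁄dX ℚ K + C 60 * K := by
    simpa only [map_ofNat] using (d⁄dX ℚ).ode_of_cubic derivative_X hα
  have hcoeff : (fun n => (f5 n : ℚ)) = fun n => coeff n K := by
    refine eq_of_two_step_recurrence (fun n => 12 * (3 * n + 1) * (3 * n + 5))
      (fun n => by exact_mod_cast f5_recurrence n) (fun n => ?_) ?_ ?_
    · rw [coeff_add_two_of_ode hode]
      ring
    · simp [K, f5, hb₀, h0]
    · have h₁ := coeff_derivative K 0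
      rw [hK', coeff_zero_eq_constantCoeff] at h₁
      norm_num [hb₀, map_ofNat constantCoeff 2] at h₁
      rw [← h₁, show f5 1 = 4 by rfl]
      norm_num
  rw [show mk (fun n => (f5 n : ℚ)) = K from
    PowerSeries.ext fun n => (coeff_mk _ _).trans (congrFun hcoeff n), hK]
  linear_combination (1 - 2 * α) * hb
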